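/- arXiv:2602.10844 — 6 statements merged into one kernel-verified Lean document; each statement's English description precedes it below -/
import Mathlib

section
/- Let P : ℕ → Prop, let n : ℕ, and let s, s' : ℕ → ℕ → Bool be such that for every i < n both s i and s' i semidecide P i. Then Ψₙ(s) = Ψₙ(s'). -/
/-- A Boolean sequence `b` semidecides a proposition `Q` if `Q ↔ ∃ j, b j = true`. -/
def Semidecides (b : ℕ → Bool) (Q : Prop) : Prop :=
  Q ↔ ∃ j, b j = true

open Classical in
/-- `tCount s n k` is the number of indices `i < n` such that `s i j = true` for some `j ≤ k`. -/
noncomputable def tCount (s : ℕ → ℕ → Bool) (n k : ℕ) : ℕ :=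
  ((Finset.range n).filter (fun i => ∃ j ≤ k, s i j = true)).card

/-- The `n`-th characteristic approximant `Ψₙ(s)`. -/
noncomputable def psiApprox (s : ℕ → ℕ → Bool) (n : ℕ) : Ordinal :=
  ⨆ k : ℕ, (Ordinal.omega0 * (tCount s n k) + k)

/-- The characteristic ordinal `Ψ(s)`. -/
noncomputable def psi (s : ℕ → ℕ → Bool) : Ordinal :=
  ⨆ n : ℕ, (psiApprox s n + n)

open Classical in
lemma psiApprox_le_aux (P : ℕ → Prop) (n : ℕ) (s s' : ℕ → ℕ → Bool)
    (hs : ∀ i < n, Semidecides (s i) (P i)) (hs' : ∀ i < n, Semidecides (s' i) (P i)) :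
    psiApprox s n ≤ psiApprox s' n := by
  refine ciSup_le fun k => ?_
  set A := (Finset.range n).filter (fun i => ∃ j ≤ k, s i j = true) with hA
  have hwit : ∀ i ∈ A, ∃ j, s' i j = true := by
    intro i hi
    simp only [hA, Finset.mem_filter, Finset.mem_range] at hi
    exact (hs' i hi.1).mp ((hs i hi.1).mpr ⟨hi.2.choose, hi.2.choose_spec.2⟩)
  set K := A.sup (fun i => if h : ∃ j, s' i j = true then Nat.find h else 0) with hK
  set k' := max k K with hk'
  have hle : tCount s n k ≤ tCount s' n k' := by
    apply Finset.card_le_card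
    intro i hi
    have hi' := hi
    simp only [hA, Finset.mem_filter, Finset.mem_range] at hi'
    have h := hwit i hi
    refine Finset.mem_filter.mpr ⟨Finset.mem_range.mpr hi'.1, ⟨Nat.find h, ?_, Nat.find_spec h⟩⟩
    calc Nat.find h ≤ K := by
          rw [hK]
          have := Finset.le_sup (f := fun i => if h : ∃ j, s' i j = true then Nat.find h else 0) hi
          simpa [h] using this
      _ ≤ k' := le_max_right _ _
  have : (Ordinal.omega0 * (tCount s n k) + k : Ordinal) ≤
      Ordinal.omega0 * (tCount s' n k') + k' := by
    refine add_le_add (mul_le_mul_right ?_ _) ?_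
    · exact_mod_cast hle
    · exact_mod_cast le_max_left k K
  exact this.trans (le_ciSup (Ordinal.bddAbove_range _) k')

theorem psiApprox_weakly_constant (P : ℕ → Prop) (n : ℕ) (s s' : ℕ → ℕ → Bool)
    (hs : ∀ i < n, Semidecides (s i) (P i)) (hs' : ∀ i < n, Semidecides (s' i) (P i)) :
    psiApprox s n = psiApprox s' n :=
  le_antisymm (psiApprox_le_aux P n s s' hs hs') (psiApprox_le_aux P n s' s hs' hs)
end

section
/- Let P : ℕ → Prop and let s : ℕ → ℕ → Bool be such that for every i, the sequence s i semidecides P i. Then (∃ n : ℕ, ω · 2 ≤ Ψₙ(s)) if and only if (∃ m : ℕ, P m). -/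
/-! If some `s i` with `i < n` ever fires, then from that stage on every term of `Ψₙ(s)` is at least
`ω + k`, so `Ψₙ(s) ≥ ω + ω`; otherwise every count `t s n k` vanishes and `Ψₙ(s) = sup k = ω`. -/

open Ordinal

section psiApprox

variable (s : ℕ → ℕ → Bool) {n : ℕ}

theorem tCount_eq_zero_iff {k : ℕ} : tCount s n k = 0 ↔ ∀ i < n, ∀ j ≤ k, s i j = false := by
  simp [tCount, Finset.filter_eq_empty_iff]

theorem psiApprox_eq_omega0 (h : ∀ i < n, ∀ j, s i j = false) : psiApprox s n = ω := by
  have ht (k : ℕ) : tCount s n k = 0 := (tCount_eq_zero_iff s).2 fun i hi j _ => h i hi j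
  simpa only [psiApprox, ht, Nat.cast_zero, mul_zero, zero_add] using iSup_natCast

theorem omega0_mul_two_le_psiApprox {i j : ℕ} (hi : i < n) (hj : s i j = true) :
    ω * 2 ≤ psiApprox s n := by
  rw [← one_add_one_eq_two, mul_add, mul_one, ← iSup_add_natCast]
  refine Ordinal.iSup_le fun k => ?_
  have ht : 1 ≤ tCount s n (j + k) := by
    rw [Nat.one_le_iff_ne_zero, ne_eq, tCount_eq_zero_iff]
    push Not
    exact ⟨i, hi, j, Nat.le_add_right j k, by simp [hj]⟩
  refine le_trans (add_le_add ?_ ?_) (le_ciSup bddAbove_of_small (j + k))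
  · exact le_mul_of_one_le_right' (by exact_mod_cast ht)
  · exact_mod_cast Nat.le_add_left k j

theorem omega0_mul_two_le_psiApprox_iff :
    ω * 2 ≤ psiApprox s n ↔ ∃ i < n, ∃ j, s i j = true := by
  refine ⟨fun h => ?_, fun ⟨i, hi, j, hj⟩ => omega0_mul_two_le_psiApprox s hi hj⟩
  by_contra! hs
  rw [psiApprox_eq_omega0 s fun i hi j => by simpa using hs i hi j] at h
  exact h.not_gt (by simp)

end psiApprox

theorem key_lemma (P : ℕ → Prop) (s : ℕ → ℕ → Bool)
    (hs : ∀ i, Semidecides (s i) (P i)) :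
    (∃ n : ℕ, Ordinal.omega0 * 2 ≤ psiApprox s n) ↔ (∃ m : ℕ, P m) := by
  simp only [omega0_mul_two_le_psiApprox_iff]
  constructor
  · rintro ⟨n, i, -, hi⟩
    exact ⟨i, (hs i).2 hi⟩
  · rintro ⟨m, hm⟩
    exact ⟨m + 1, m, m.lt_succ_self, (hs m).1 hm⟩
end

section
/- Let n : ℕ and let s : ℕ → ℕ → Bool be such that for every i < n there exists j with s i j = true. Then Ψₙ(s) = ω · (n + 1). -/
/-!
Once `k` exceeds a witness `j` for each `i < n`, `tCount s n k = n`; since `tCount s n k ≤ n`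
always, the terms `ω * tCount s n k + k` are all below `ω * n + ω` and eventually agree with
`ω * n + k`, whose supremum is `ω * n + ω = ω * (n + 1)`.
-/

open Filter Ordinal

universe u

theorem iSup_omega0_mul_add_natCast_of_eventually_eq {t : ℕ → ℕ} {m : ℕ} (hle : ∀ k, t k ≤ m)
    (hev : ∀ᶠ k in atTop, t k = m) :
    ⨆ k : ℕ, (ω * t k + k : Ordinal.{u}) = ω * (m + 1) := by
  rw [mul_add_one]
  apply le_antisymm
  · refine Ordinal.iSup_le fun k => ?_
    calc ω * t k + k ≤ ω * t k + ω := by gcongr; exact (natCast_lt_omega0 k).le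
      _ = ω * (t k + 1) := (mul_add_one _ _).symm
      _ ≤ ω * (m + 1) := by gcongr; exact_mod_cast hle k
      _ = ω * m + ω := mul_add_one _ _
  · obtain ⟨K, hK⟩ := hev.exists_forall_of_atTop
    rw [← iSup_add_natCast]
    refine Ordinal.iSup_le fun k => ?_
    calc (ω : Ordinal.{u}) * m + k ≤ ω * t (max k K) + (max k K : ℕ) := by
          rw [hK _ (le_max_right k K)]; gcongr; exact le_max_left k K
      _ ≤ ⨆ k : ℕ, (ω * t k + k : Ordinal.{u}) := Ordinal.le_iSup _ _

theorem tCount_le (s : ℕ → ℕ → Bool) (n k : ℕ) : tCount s n k ≤ n := by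
  simpa [tCount] using Finset.card_filter_le (Finset.range n) _

theorem eventually_tCount_eq {s : ℕ → ℕ → Bool} {n : ℕ} (hs : ∀ i < n, ∃ j, s i j = true) :
    ∀ᶠ k in atTop, tCount s n k = n := by
  have hfired : ∀ᶠ k in atTop, ∀ i ∈ Finset.range n, ∃ j ≤ k, s i j = true := by
    refine (Finset.range n).eventually_all.2 fun i hi => ?_
    obtain ⟨j, hj⟩ := hs i (Finset.mem_range.1 hi)
    filter_upwards [eventually_ge_atTop j] with k hk using ⟨j, hk, hj⟩
  filter_upwards [hfired] with k hk
  classical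
  rw [tCount, Finset.filter_true_of_mem hk, Finset.card_range]

theorem psiApprox_of_all_true (n : ℕ) (s : ℕ → ℕ → Bool)
    (hs : ∀ i < n, ∃ j, s i j = true) :
    psiApprox s n = Ordinal.omega0 * (n + 1) :=
  iSup_omega0_mul_add_natCast_of_eventually_eq (tCount_le s n) (eventually_tCount_eq hs)
end

section
/- Let P : ℕ → Prop be downward closed, i.e., for every k, P (k + 1) implies P k, and let s : ℕ → ℕ → Bool be such that for every i, the sequence s i semidecides P i. Then (∀ i : ℕ, P i) if and only if ω ^ 2 ≤ Ψ(s). -/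
/-!
`Ψ(s)` reaches `ω²` exactly when the counts `t s n k` are unbounded: each value `m` of the count
contributes `ω * m` to `Ψ(s)`, while a bound `m` on all counts keeps `Ψ(s) ≤ ω * (m + 2)`.
If every `P i` holds, the first `m` sequences all fire before a common stage, so the count `m` is
attained; if `P i` fails, downward closure makes every `P x` with `x ≥ i` fail, so at most `i`
sequences ever fire.
-/

open Ordinal

namespace Ordinal

theorem omega0_mul_add_nat_lt_omega0_mul_add_one (a : Ordinal) (k : ℕ) :
    ω * a + k < ω * (a + 1) := by
  rw [mul_add_one]
  exact add_lt_add_right (natCast_lt_omega0 k) _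

end Ordinal

section

variable (s : ℕ → ℕ → Bool)

theorem omega0_mul_tCount_add_le_psiApprox (n k : ℕ) :
    ω * tCount s n k + k ≤ psiApprox s n := by
  rw [psiApprox]
  exact le_ciSup Ordinal.bddAbove_of_small k

theorem psiApprox_add_le_psi (n : ℕ) : psiApprox s n + n ≤ psi s := by
  rw [psi]
  exact le_ciSup Ordinal.bddAbove_of_small n

theorem tCount_le_of_forall_lt {m : ℕ} (h : ∀ x j, s x j = true → x < m) (n k : ℕ) :
    tCount s n k ≤ m := by
  have hsub : (Finset.range n).filter (fun x => ∃ j ≤ k, s x j = true) ⊆ Finset.range m :=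
    fun x hx => by
      obtain ⟨-, j, -, hxj⟩ := Finset.mem_filter.1 hx
      exact Finset.mem_range.2 (h x j hxj)
  simpa [tCount] using Finset.card_le_card hsub

theorem exists_tCount_eq {n : ℕ} (h : ∀ i < n, ∃ j, s i j = true) : ∃ k, tCount s n k = n := by
  have hfire : ∀ᶠ k in Filter.atTop, ∀ i ∈ Finset.range n, ∃ j ≤ k, s i j = true :=
    (Filter.eventually_all_finset _).2 fun i hi => by
      obtain ⟨j, hj⟩ := h i (Finset.mem_range.1 hi)
      exact Filter.eventually_atTop.2 ⟨j, fun k hk => ⟨j, hk, hj⟩⟩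
  obtain ⟨k, hk⟩ := hfire.exists
  exact ⟨k, by rw [tCount, Finset.filter_true_of_mem hk, Finset.card_range]⟩

theorem psi_le_omega0_mul_of_tCount_le {m : ℕ} (h : ∀ n k, tCount s n k ≤ m) :
    psi s ≤ ω * (m + 1 + 1) := by
  have happrox : ∀ n, psiApprox s n ≤ ω * (m + 1) := fun n =>
    Ordinal.iSup_le fun k =>
      (add_le_add_left (mul_le_mul_right (Nat.cast_le.2 (h n k)) ω) k).trans
        (omega0_mul_add_nat_lt_omega0_mul_add_one _ k).le
  exact Ordinal.iSup_le fun n =>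
    (add_le_add_left (happrox n) n).trans (omega0_mul_add_nat_lt_omega0_mul_add_one _ n).le

theorem omega0_sq_le_psi_iff : ω ^ 2 ≤ psi s ↔ ∀ m, ∃ n k, m ≤ tCount s n k := by
  constructor
  · intro hle m
    by_contra! hbound
    have hlt : ω * ((m : Ordinal) + 1 + 1) < ω ^ 2 := by
      rw [sq]
      exact mul_lt_mul_of_pos_left (by exact_mod_cast natCast_lt_omega0 (m + 1 + 1)) omega0_pos
    exact (psi_le_omega0_mul_of_tCount_le s fun n k => (hbound n k).le).trans_lt hlt |>.not_ge hle
  · intro hunbounded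
    rw [sq, mul_le_iff_of_isSuccLimit isSuccLimit_omega0]
    intro b hb
    obtain ⟨m, rfl⟩ := lt_omega0.1 hb
    obtain ⟨n, k, hm⟩ := hunbounded m
    calc ω * (m : Ordinal) ≤ ω * tCount s n k + k :=
          (mul_le_mul_right (Nat.cast_le.2 hm) ω).trans le_self_add
      _ ≤ psiApprox s n + n := (omega0_mul_tCount_add_le_psiApprox s n k).trans le_self_add
      _ ≤ psi s := psiApprox_add_le_psi s n

end

theorem countable_meet_omega_sq (P : ℕ → Prop) (hP : ∀ k, P (k + 1) → P k)
    (s : ℕ → ℕ → Bool) (hs : ∀ i, Semidecides (s i) (P i)) :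
    (∀ i : ℕ, P i) ↔ Ordinal.omega0 ^ 2 ≤ psi s := by
  have hanti : Antitone P := antitone_nat_of_succ_le hP
  rw [omega0_sq_le_psi_iff]
  constructor
  · intro hall m
    obtain ⟨k, hk⟩ := exists_tCount_eq s fun i _ => (hs i).1 (hall i)
    exact ⟨m, k, hk.ge⟩
  · intro hunbounded i
    by_contra hi
    have hbound : ∀ n k, tCount s n k ≤ i := tCount_le_of_forall_lt s fun x j hxj =>
      lt_of_not_ge fun hix => hi (hanti hix ((hs x).2 ⟨j, hxj⟩))
    obtain ⟨n, k, hnk⟩ := hunbounded (i + 1)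
    exact (hbound n k).not_gt hnk
end

section
/- Let P : ℕ → Prop and let s : ℕ → ℕ → Bool be such that for every i, the sequence s i semidecides P i. Then ω · 3 ≤ Ψ(s) if and only if ∃ n : ℕ, P n. -/
/-!
If no `s i` ever fires, every count `tCount s n k` is `0`, so `Ψₙ(s) = ω` and `Ψ(s) = ω * 2`.
If `s m j = true`, then `tCount s n k ≥ 1` for all `n > m` and `k ≥ j`, which pushes every
late approximant `Ψₙ(s)` up to `ω * 2` and hence `Ψ(s)` up to `ω * 3`. Both estimates are
instances of one fact: a supremum of `ω * a + k` over `k : ℕ` is `ω * (a + 1)`.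
-/

open Ordinal Filter

theorem Ordinal.iSup_le_omega0_mul_add_one {a : Ordinal} {f : ℕ → Ordinal}
    (h : ∀ k, f k ≤ ω * a + k) : ⨆ k, f k ≤ ω * (a + 1) :=
  ciSup_le' fun k => (h k).trans <| by
    rw [mul_add_one]
    exact (add_lt_add_right (natCast_lt_omega0 k) _).le

theorem Ordinal.omega0_mul_add_one_le_iSup {a : Ordinal} {f : ℕ → Ordinal}
    (h : ∀ᶠ k in atTop, ω * a + k ≤ f k) : ω * (a + 1) ≤ ⨆ k, f k := by
  obtain ⟨N, hN⟩ := eventually_atTop.mp h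
  rw [mul_add_one, add_le_iff_of_isSuccLimit isSuccLimit_omega0]
  intro c hc
  obtain ⟨k, rfl⟩ := lt_omega0.mp hc
  calc ω * a + k ≤ ω * a + (k + N : ℕ) := by gcongr; exact_mod_cast k.le_add_right N
    _ ≤ f (k + N) := hN _ (N.le_add_left k)
    _ ≤ ⨆ k, f k := le_ciSup bddAbove_of_small _

theorem tCount_eq_zero {s : ℕ → ℕ → Bool} (hs : ∀ i j, s i j = false) (n k : ℕ) :
    tCount s n k = 0 := by
  simp [tCount, hs]

theorem tCount_pos {s : ℕ → ℕ → Bool} {m j n k : ℕ} (hs : s m j = true) (hmn : m < n)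
    (hjk : j ≤ k) : 0 < tCount s n k := by
  unfold tCount
  exact Finset.card_pos.mpr
    ⟨m, Finset.mem_filter.mpr ⟨Finset.mem_range.mpr hmn, by simpa using ⟨j, hjk, hs⟩⟩⟩

theorem psi_le_omega0_mul_two {s : ℕ → ℕ → Bool} (hs : ∀ i j, s i j = false) :
    psi s ≤ ω * 2 := by
  have hΨₙ (n : ℕ) : psiApprox s n ≤ ω * 1 := by
    simpa [psiApprox] using iSup_le_omega0_mul_add_one (a := 0) fun k => by simp [tCount_eq_zero hs]
  have := iSup_le_omega0_mul_add_one (f := fun n => psiApprox s n + n) (a := 1)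
    fun n => by gcongr; exact hΨₙ n
  rwa [one_add_one_eq_two] at this

theorem omega0_mul_three_le_psi {s : ℕ → ℕ → Bool} {m j : ℕ} (hs : s m j = true) :
    ω * 3 ≤ psi s := by
  have hΨₙ (n : ℕ) (hmn : m < n) : ω * 2 ≤ psiApprox s n := by
    have := omega0_mul_add_one_le_iSup (f := fun k => ω * (tCount s n k) + k) (a := 1) <|
      (eventually_ge_atTop j).mono fun k hjk => by
        gcongr
        exact_mod_cast tCount_pos hs hmn hjk
    rwa [one_add_one_eq_two] at this
  have := omega0_mul_add_one_le_iSup (f := fun n => psiApprox s n + n) (a := 2) <|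
    (eventually_gt_atTop m).mono fun n hmn => by gcongr; exact hΨₙ n hmn
  rwa [two_add_one_eq_three] at this

theorem countable_join_omega_mul_three (P : ℕ → Prop) (s : ℕ → ℕ → Bool)
    (hs : ∀ i, Semidecides (s i) (P i)) :
    Ordinal.omega0 * 3 ≤ psi s ↔ ∃ n : ℕ, P n := by
  refine ⟨fun h => ?_, fun ⟨m, hm⟩ => ?_⟩
  · by_contra hP
    have hfalse (i j : ℕ) : s i j = false := by
      by_contra hij
      exact hP ⟨i, (hs i).mpr ⟨j, by simpa using hij⟩⟩
    have h23 : ω * 2 < ω * 3 := by gcongr <;> norm_num [omega0_pos]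
    exact (h.trans (psi_le_omega0_mul_two hfalse)).not_gt h23
  · obtain ⟨j, hj⟩ := (hs m).mp hm
    exact omega0_mul_three_le_psi hj
end

section
/- Let P, Q : ℕ → Prop with P n → Q n for all n, and let s, u : ℕ → ℕ → Bool be such that for every i, the sequence s i semidecides P i and the sequence u i semidecides Q i. Then Ψ(s) ≤ Ψ(u). -/
universe v

open Ordinal

theorem Semidecides.exists_bound_forall_lt {u : ℕ → ℕ → Bool} {Q : ℕ → Prop}
    (hu : ∀ i, Semidecides (u i) (Q i)) (n : ℕ) :
    ∃ K, ∀ i < n, Q i → ∃ j ≤ K, u i j = true := by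
  choose! w hw using fun i (hQ : Q i) => (hu i).mp hQ
  exact ⟨(Finset.range n).sup w, fun i hi hQi =>
    ⟨w i, Finset.le_sup (Finset.mem_range.mpr hi), hw i hQi⟩⟩

theorem tCount_le_tCount {s u : ℕ → ℕ → Bool} {n k k' : ℕ}
    (h : ∀ i < n, (∃ j ≤ k, s i j = true) → ∃ j ≤ k', u i j = true) :
    tCount s n k ≤ tCount u n k' := by
  classical
  unfold tCount
  refine Finset.card_le_card fun i hi => ?_
  simp only [Finset.mem_filter, Finset.mem_range] at hi ⊢
  exact ⟨hi.1, h i hi.1 hi.2⟩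

theorem psiApprox_le_psiApprox {s u : ℕ → ℕ → Bool} {n : ℕ}
    (h : ∀ k, ∃ k' ≥ k, tCount s n k ≤ tCount u n k') :
    psiApprox.{v} s n ≤ psiApprox u n := by
  refine ciSup_le fun k => ?_
  obtain ⟨k', hkk', hcount⟩ := h k
  calc ω * (tCount s n k : Ordinal.{v}) + k ≤ ω * (tCount u n k' : Ordinal.{v}) + k' := by gcongr
    _ ≤ psiApprox u n := le_ciSup bddAbove_of_small k'

theorem psi_le_psi {s u : ℕ → ℕ → Bool} (h : ∀ n, psiApprox.{v} s n ≤ psiApprox u n) :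
    psi.{v} s ≤ psi u :=
  ciSup_le fun n => (add_le_add_left (h n) _).trans (le_ciSup bddAbove_of_small n)

theorem psi_monotone (P Q : ℕ → Prop) (hPQ : ∀ n, P n → Q n)
    (s u : ℕ → ℕ → Bool)
    (hs : ∀ i, Semidecides (s i) (P i)) (hu : ∀ i, Semidecides (u i) (Q i)) :
    psi s ≤ psi u := by
  refine psi_le_psi fun n => psiApprox_le_psiApprox fun k => ?_
  obtain ⟨K, hK⟩ := Semidecides.exists_bound_forall_lt hu n
  refine ⟨max k K, le_max_left _ _, tCount_le_tCount fun i hi ⟨j, _, hj⟩ => ?_⟩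
  obtain ⟨j', hj'K, hj'⟩ := hK i hi (hPQ i ((hs i).mpr ⟨j, hj⟩))
  exact ⟨j', hj'K.trans (le_max_right _ _), hj'⟩
end
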